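/- arXiv:1911.05876 — 3 statements merged into one kernel-verified Lean document; each statement's English description precedes it below -/
import Mathlib

section
/- Suppose every explanation action e_o for observation o has as precondition the ordering fluent p_{o'} for every observation o' nested in a group immediately preceding a group containing o, no action deletes any ordering fluent, and all ordering fluents are initially false. Then in any valid plan achieving all ordering fluents, every explanation action for an observation in an earlier member of an ordered group occurs strictly before every explanation action for an observation in a later member. -/
/-- A STRIPS action with positive preconditions `pre`, negative preconditions `npre`
(fluents that must be false), add list and delete list. -/
structure StripsAction (F : Type*) where
  pre : Set F
  npre : Set F
  add : Set F
  del : Set F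

/-- Applying an action to a state: `s' = (s \ del a) ∪ add a`. -/
def applyAction {F : Type*} (s : Set F) (a : StripsAction F) : Set F :=
  (s \ a.del) ∪ a.add

/-- The `i`-th state of the execution trace of `π` from `I`. -/
def stateAt {F : Type*} (I : Set F) (π : List (StripsAction F)) (i : ℕ) : Set F :=
  (π.take i).foldl applyAction I

/-- An action is applicable in state `s` iff its positive preconditions hold
and its negative preconditions do not hold in `s`. -/
def Applicable {F : Type*} (s : Set F) (a : StripsAction F) : Prop :=
  a.pre ⊆ s ∧ ∀ p ∈ a.npre, p ∉ s

/-- A valid plan: every action is applicable in the state produced by its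
predecessors, starting from the initial state. -/
def ValidPlan {F : Type*} (I : Set F) (π : List (StripsAction F)) : Prop :=
  ∀ i, ∀ a, π[i]? = some a → Applicable (stateAt I π i) a

/-!
Ordering fluents are never deleted, so once `p o₁` holds it holds forever. If `e o₂` were
executed at or before `e o₁`, its precondition `p o₁` would already hold when `e o₁` runs,
contradicting the negative precondition `p o₁` of `e o₁`.
-/

section

variable {F : Type*}

lemma mem_foldl_applyAction {x : F} {s : Set F} {l : List (StripsAction F)} (hx : x ∈ s)
    (hdel : ∀ a ∈ l, x ∉ a.del) : x ∈ l.foldl applyAction s := by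
  induction l generalizing s with
  | nil => exact hx
  | cons a l ih =>
    exact ih (Or.inl ⟨hx, hdel a List.mem_cons_self⟩) fun b hb => hdel b (List.mem_cons_of_mem a hb)

lemma mem_stateAt_of_le {I : Set F} {π : List (StripsAction F)} {x : F} {i j : ℕ}
    (hdel : ∀ a ∈ π, x ∉ a.del) (hij : i ≤ j) (hx : x ∈ stateAt I π i) :
    x ∈ stateAt I π j := by
  unfold stateAt at *
  rw [← List.take_append_drop i (π.take j), List.take_take, min_eq_left hij, List.foldl_append]
  exact mem_foldl_applyAction hx fun a ha =>
    hdel a (List.take_subset j π (List.drop_subset i _ ha))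

end

theorem earlier_explanations_precede_later_general {F O : Type*} (I : Set F)
    (π : List (StripsAction F)) (e : O → StripsAction F) (p : O → F)
    (O₁ O₂ : Set O)
    (hdel : ∀ o, ∀ a ∈ π, p o ∉ a.del)
    (hselfnpre : ∀ o, p o ∈ (e o).npre)
    (hord : ∀ o₂ ∈ O₂, ∀ o₁ ∈ O₁, p o₁ ∈ (e o₂).pre)
    (hvalid : ValidPlan I π) :
    ∀ o₁ ∈ O₁, ∀ o₂ ∈ O₂, ∀ i₁ i₂,
      π[(i₁ : ℕ)]? = some (e o₁) → π[(i₂ : ℕ)]? = some (e o₂) → i₁ < i₂ := by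
  intro o₁ h₁ o₂ h₂ i₁ i₂ hg₁ hg₂
  by_contra! hle
  have hp₂ : p o₁ ∈ stateAt I π i₂ := (hvalid i₂ _ hg₂).1 (hord o₂ h₂ o₁ h₁)
  have hp₁ : p o₁ ∈ stateAt I π i₁ := mem_stateAt_of_le (hdel o₁) hle hp₂
  exact (hvalid i₁ _ hg₁).2 (p o₁) (hselfnpre o₁) hp₁

/-- Ordering via ordering fluents: each observation `o` has a dedicated fluent
`p o`, initially false, added only by its explanation action `e o`, never
deleted, and required false by `e o` itself. If every explanation action for an
observation in the later member `O₂` of an ordered group has `p o₁` as a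
precondition for every `o₁` in the earlier member `O₁`, then in any valid plan
achieving all ordering fluents, every occurrence of an explanation action for
`O₁` is strictly before every occurrence of an explanation action for `O₂`. -/
theorem earlier_explanations_precede_later {F O : Type*} (I : Set F)
    (π : List (StripsAction F)) (e : O → StripsAction F) (p : O → F)
    (O₁ O₂ : Set O)
    (hpinj : Function.Injective p)
    (hinit : ∀ o, p o ∉ I)
    (hadd : ∀ o, p o ∈ (e o).add)
    (honly : ∀ o, ∀ a ∈ π, p o ∈ a.add → a = e o)
    (hdel : ∀ o, ∀ a ∈ π, p o ∉ a.del)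
    (hselfnpre : ∀ o, p o ∈ (e o).npre)
    (hord : ∀ o₂ ∈ O₂, ∀ o₁ ∈ O₁, p o₁ ∈ (e o₂).pre)
    (hvalid : ValidPlan I π)
    (hachieve : ∀ o, p o ∈ stateAt I π π.length) :
    ∀ o₁ ∈ O₁, ∀ o₂ ∈ O₂, ∀ i₁ i₂,
      π[(i₁ : ℕ)]? = some (e o₁) → π[(i₂ : ℕ)]? = some (e o₂) → i₁ < i₂ :=
  earlier_explanations_precede_later_general I π e p O₁ O₂ hdel hselfnpre hord hvalid
end

section
/- If a plan segment π_j^k (over the compiled action set) achieves the ordering fluent p_o for a fluent observation o with fluent set F_o, then F_o is a subset of some state occurring in the execution trace of π_j^k, and hence ψ(π_j^k) satisfies o. -/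
/-! A fluent that is false initially and true at the end of the plan must have been added by
some action `π[i]`. In the situation of the theorem that action is the explanation action `e`,
and validity puts its preconditions, hence `Fo`, into the state before step `i`. Agreement of the
traces on the non-ordering fluents then carries `Fo` over to the trace of `ψ(π)`. -/

section Trace

variable {F : Type*} (I : Set F) (π : List (StripsAction F))

@[simp]
lemma stateAt_zero : stateAt I π 0 = I := by
  simp [stateAt]

lemma stateAt_succ_of_lt {i : ℕ} (hi : i < π.length) :
    stateAt I π (i + 1) = applyAction (stateAt I π i) π[i] := by
  simp only [stateAt, List.take_add_one, List.getElem?_eq_getElem hi, Option.toList_some,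
    List.foldl_append, List.foldl_cons, List.foldl_nil]

lemma stateAt_succ_of_length_le {i : ℕ} (hi : π.length ≤ i) :
    stateAt I π (i + 1) = stateAt I π i := by
  simp only [stateAt, List.take_of_length_le hi, List.take_of_length_le (Nat.le_succ_of_le hi)]

lemma mem_add_of_notMem_of_mem_applyAction {s : Set F} {a : StripsAction F} {p : F}
    (hs : p ∉ s) (h : p ∈ applyAction s a) : p ∈ a.add :=
  h.resolve_left fun h' => hs h'.1

lemma exists_mem_add_of_mem_stateAt {p : F} {n : ℕ} (hinit : p ∉ I)
    (hn : p ∈ stateAt I π n) : ∃ (i : ℕ) (hi : i < π.length), p ∈ π[i].add := by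
  obtain ⟨i, hout, hin⟩ := Nat.exists_not_and_succ_of_not_zero_of_exists
    (p := fun k => p ∈ stateAt I π k) (by simpa using hinit) ⟨n, hn⟩
  by_cases hi : i < π.length
  · rw [stateAt_succ_of_lt I π hi] at hin
    exact ⟨i, hi, mem_add_of_notMem_of_mem_applyAction hout hin⟩
  · rw [stateAt_succ_of_length_le I π (not_lt.mp hi)] at hin
    exact absurd hin hout

lemma ValidPlan.pre_subset_stateAt {I : Set F} {π : List (StripsAction F)}
    (hvalid : ValidPlan I π) {i : ℕ} (hi : i < π.length) : π[i].pre ⊆ stateAt I π i :=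
  (hvalid i π[i] (List.getElem?_eq_getElem hi)).1

end Trace

/-- Lemma 1 (fluent-observation case): if a valid plan segment `π` over the
compiled actions achieves the ordering fluent `p` of a fluent observation `o`
with fluent set `Fo` — where `p` is initially false and the only action adding
`p` is the explanation action `e`, whose preconditions include `Fo` — then `Fo`
is a subset of some state of the execution trace of `π`; hence, given that the
trace of `ψ(π)` agrees with that of `π` on the non-ordering fluents (which
include `Fo`), the transformed plan `ψ(π)` satisfies `o`. -/
theorem achieving_fluent_obs_ordering_fluent_implies_satisfaction
    {F : Type*} (I : Set F) (π : List (StripsAction F))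
    (e : StripsAction F) (p : F) (Fo : Set F)
    (hinit : p ∉ I)
    (honly : ∀ a ∈ π, p ∈ a.add → a = e)
    (hpre : Fo ⊆ e.pre)
    (hvalid : ValidPlan I π)
    (hachieve : p ∈ stateAt I π π.length)
    -- the trace of ψ(π) agrees with the trace of π on non-ordering fluents
    (ψπ : List (StripsAction F)) (nonOrdering : Set F)
    (hFo : Fo ⊆ nonOrdering)
    (hagree : ∀ i ≤ π.length, ∃ i' ≤ ψπ.length,
      stateAt I π i ∩ nonOrdering = stateAt I ψπ i' ∩ nonOrdering) :
    (∃ i ≤ π.length, Fo ⊆ stateAt I π i) ∧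
    (∃ i' ≤ ψπ.length, Fo ⊆ stateAt I ψπ i') := by
  obtain ⟨i, hi, hadd⟩ := exists_mem_add_of_mem_stateAt I π hinit hachieve
  have he : π[i] = e := honly _ (List.getElem_mem hi) hadd
  have hsub : Fo ⊆ stateAt I π i :=
    hpre.trans (he ▸ hvalid.pre_subset_stateAt hi)
  obtain ⟨i', hi', heq⟩ := hagree i hi.le
  have hsub' : Fo ⊆ stateAt I ψπ i' ∩ nonOrdering :=
    heq ▸ Set.subset_inter hsub hFo
  exact ⟨⟨i, hi.le, hsub⟩, ⟨i', hi', hsub'.trans Set.inter_subset_left⟩⟩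
end

section
/- If a plan segment π_j^k over the compiled actions achieves the ordering fluent p_o for an action observation o of action a, then ψ(π_j^k) contains a, i.e., ψ(π_j^k) satisfies o. -/
theorem mem_or_exists_mem_add_of_mem_foldl_applyAction {F : Type*} {p : F}
    (π : List (StripsAction F)) {s : Set F} (h : p ∈ π.foldl applyAction s) :
    p ∈ s ∨ ∃ x ∈ π, p ∈ x.add := by
  induction π generalizing s with
  | nil => exact Or.inl h
  | cons b π ih =>
    rcases ih h with ((⟨hs, -⟩ | hb) | ⟨x, hx, hpx⟩)
    · exact Or.inl hs
    · exact Or.inr ⟨b, List.mem_cons_self, hb⟩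
    · exact Or.inr ⟨x, List.mem_cons_of_mem b hx, hpx⟩

theorem mem_or_exists_mem_add_of_mem_stateAt {F : Type*} {I : Set F} {π : List (StripsAction F)}
    {i : ℕ} {p : F} (h : p ∈ stateAt I π i) : p ∈ I ∨ ∃ x ∈ π, p ∈ x.add :=
  (mem_or_exists_mem_add_of_mem_foldl_applyAction _ h).imp_right
    fun ⟨x, hx, hpx⟩ => ⟨x, List.mem_of_mem_take hx, hpx⟩

theorem achieving_action_obs_ordering_fluent_implies_satisfaction_general
    {F A : Type*} (I : Set F) (π : List (StripsAction F))
    (e : StripsAction F) (p : F) (a : A)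
    (ψstep : StripsAction F → Option A)
    (hinit : p ∉ I)
    (honly : ∀ x ∈ π, p ∈ x.add → x = e)
    (hψe : ψstep e = some a)
    (hachieve : p ∈ stateAt I π π.length) :
    a ∈ π.filterMap ψstep := by
  obtain hI | ⟨x, hx, hpx⟩ := mem_or_exists_mem_add_of_mem_stateAt hachieve
  · exact absurd hI hinit
  · exact List.mem_filterMap.2 ⟨x, hx, honly x hx hpx ▸ hψe⟩

/-- Lemma 1 (action-observation case): if a valid plan segment `π` over the
compiled actions achieves the ordering fluent `p` of an action observation `o`
of original action `a` — where `p` is initially false and the only compiled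
action adding `p` is the explanation action `e`, which the transformation
`ψ` (given by `π.filterMap ψstep`) maps back to `a` — then `ψ(π)` contains `a`,
i.e. `ψ(π)` satisfies `o`. -/
theorem achieving_action_obs_ordering_fluent_implies_satisfaction
    {F A : Type*} (I : Set F) (π : List (StripsAction F))
    (e : StripsAction F) (p : F) (a : A)
    (ψstep : StripsAction F → Option A)
    (hinit : p ∉ I)
    (honly : ∀ x ∈ π, p ∈ x.add → x = e)
    (hψe : ψstep e = some a)
    (hvalid : ValidPlan I π)
    (hachieve : p ∈ stateAt I π π.length) :
    a ∈ π.filterMap ψstep :=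
  achieving_action_obs_ordering_fluent_implies_satisfaction_general I π e p a ψstep hinit honly hψe
    hachieve
end
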